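/- arXiv:1710.00876 — 2 statements merged into one kernel-verified Lean document; each statement's English description precedes it below -/
import Mathlib

section
/- Let S consist of 2n points given as n pairs {p_i, q_i} in a metric space, with n even. Call a set R ⊆ S feasible if it contains exactly one point of each pair. Let R̂ be a feasible set minimizing matchCost over all feasible sets. Then max(matchCost(R̂), matchCost(S \ R̂)) ≤ 3 · min over all feasible sets R of max(matchCost(R), matchCost(S \ R)). -/
variable {α : Type*} [MetricSpace α] [DecidableEq α]

/-- `M` is a perfect matching on the finite point set `X`: a set of edges on `X`
with distinct endpoints such that every point of `X` lies on exactly one edge. -/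
def IsPerfectMatchingOn (X : Finset α) (M : Finset (α × α)) : Prop :=
  (∀ e ∈ M, e.1 ∈ X ∧ e.2 ∈ X ∧ e.1 ≠ e.2) ∧
    ∀ x ∈ X, ∃! e, e ∈ M ∧ (x = e.1 ∨ x = e.2)

/-- The minimum total edge length of a perfect matching on `X`. -/
noncomputable def matchCost (X : Finset α) : ℝ :=
  sInf {c | ∃ M : Finset (α × α), IsPerfectMatchingOn X M ∧ c = ∑ e ∈ M, dist e.1 e.2}

set_option linter.unusedSectionVars false
set_option linter.unusedVariables false

lemma pm_unique {X : Finset α} {M : Finset (α × α)} (hM : IsPerfectMatchingOn X M)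
    {x : α} (hx : x ∈ X) {e e' : α × α} (he : e ∈ M) (hor : x = e.1 ∨ x = e.2)
    (he' : e' ∈ M) (hor' : x = e'.1 ∨ x = e'.2) : e = e' := by
  obtain ⟨f, _, huniq⟩ := hM.2 x hx
  exact (huniq e ⟨he, hor⟩).trans (huniq e' ⟨he', hor'⟩).symm

lemma pm_empty : IsPerfectMatchingOn (∅ : Finset α) ∅ := by
  constructor
  · intro e he; simp at he
  · intro x hx; simp at hx

lemma pm_insert {X : Finset α} {M : Finset (α × α)} {a b : α}
    (hab : a ≠ b) (ha : a ∉ X) (hb : b ∉ X) (hM : IsPerfectMatchingOn X M) :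
    IsPerfectMatchingOn (insert a (insert b X)) (insert (a, b) M) := by
  constructor
  · intro e he
    rcases Finset.mem_insert.mp he with rfl | heM
    · exact ⟨by simp, by simp, hab⟩
    · obtain ⟨h1, h2, h3⟩ := hM.1 e heM
      exact ⟨by simp [h1], by simp [h2], h3⟩
  · intro x hx
    rcases Finset.mem_insert.mp hx with hxa | hx
    · refine ⟨(a, b), ⟨Finset.mem_insert_self _ _, Or.inl hxa⟩, ?_⟩
      rintro e ⟨he, hor⟩
      rcases Finset.mem_insert.mp he with rfl | heM
      · rfl
      · obtain ⟨h1, h2, _⟩ := hM.1 e heM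
        rcases hor with h | h
        · rw [← h, hxa] at h1; exact absurd h1 ha
        · rw [← h, hxa] at h2; exact absurd h2 ha
    rcases Finset.mem_insert.mp hx with hxb | hx
    · refine ⟨(a, b), ⟨Finset.mem_insert_self _ _, Or.inr hxb⟩, ?_⟩
      rintro e ⟨he, hor⟩
      rcases Finset.mem_insert.mp he with rfl | heM
      · rfl
      · obtain ⟨h1, h2, _⟩ := hM.1 e heM
        rcases hor with h | h
        · rw [← h, hxb] at h1; exact absurd h1 hb
        · rw [← h, hxb] at h2; exact absurd h2 hb
    · obtain ⟨e, ⟨heM, hor⟩, huniq⟩ := hM.2 x hx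
      refine ⟨e, ⟨Finset.mem_insert_of_mem heM, hor⟩, ?_⟩
      rintro e' ⟨he', hor'⟩
      rcases Finset.mem_insert.mp he' with rfl | he'M
      · rcases hor' with h | h
        · exact absurd hx (by rw [h]; simpa using ha)
        · exact absurd hx (by rw [h]; simpa using hb)
      · exact huniq e' ⟨he'M, hor'⟩

lemma pm_exists {X : Finset α} (h : Even X.card) :
    ∃ M, IsPerfectMatchingOn X M := by
  induction X using Finset.strongInduction with
  | _ X ih =>
    rcases Finset.eq_empty_or_nonempty X with rfl | ⟨a, ha⟩
    · exact ⟨∅, pm_empty⟩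
    · have hcard : 2 ≤ X.card := by
        rcases h with ⟨k, hk⟩
        have : 0 < X.card := Finset.card_pos.mpr ⟨a, ha⟩
        omega
      obtain ⟨b, hb⟩ : (X.erase a).Nonempty := by
        rw [← Finset.card_pos, Finset.card_erase_of_mem ha]; omega
      have hab : a ≠ b := fun hh => (Finset.mem_erase.mp hb).1 hh.symm
      have hbX : b ∈ X := (Finset.mem_erase.mp hb).2
      set X' := (X.erase a).erase b with hX'
      have hX'sub : X' ⊂ X :=
        ((Finset.erase_ssubset hb).trans_subset (Finset.erase_subset _ _))
      have hcard' : X'.card = X.card - 2 := by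
        rw [hX', Finset.card_erase_of_mem hb, Finset.card_erase_of_mem ha]; omega
      have heven' : Even X'.card := by
        rcases h with ⟨k, hk⟩; exact ⟨k - 1, by omega⟩
      obtain ⟨M', hM'⟩ := ih X' hX'sub heven'
      refine ⟨insert (a, b) M', ?_⟩
      have hrw : X = insert a (insert b X') := by
        rw [hX', Finset.insert_erase hb, Finset.insert_erase ha]
      rw [hrw]
      exact pm_insert hab (by simp [hX', hab]) (by simp [hX']) hM'

lemma pm_edge {X : Finset α} {M : Finset (α × α)} (hM : IsPerfectMatchingOn X M)
    {x : α} (hx : x ∈ X) :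
    ∃ e ∈ M, ∃ z, z ≠ x ∧ z ∈ X ∧ ((e.1 = x ∧ e.2 = z) ∨ (e.1 = z ∧ e.2 = x)) := by
  obtain ⟨e, ⟨heM, hor⟩, _⟩ := hM.2 x hx
  obtain ⟨h1, h2, h3⟩ := hM.1 e heM
  rcases hor with h | h
  · refine ⟨e, heM, e.2, ?_, h2, Or.inl ⟨h.symm, rfl⟩⟩
    rw [← h] at h3; exact fun hh => h3 hh.symm
  · refine ⟨e, heM, e.1, ?_, h1, Or.inr ⟨rfl, h.symm⟩⟩
    rw [← h] at h3; exact h3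

lemma pm_erase {X : Finset α} {M : Finset (α × α)} (hM : IsPerfectMatchingOn X M)
    {e : α × α} (he : e ∈ M) :
    IsPerfectMatchingOn (X \ {e.1, e.2}) (M.erase e) := by
  constructor
  · intro e' he'
    have he'M : e' ∈ M := Finset.mem_of_mem_erase he'
    have hne : e' ≠ e := Finset.ne_of_mem_erase he'
    obtain ⟨h1, h2, h3⟩ := hM.1 e' he'M
    obtain ⟨g1, g2, g3⟩ := hM.1 e he
    refine ⟨Finset.mem_sdiff.mpr ⟨h1, ?_⟩, Finset.mem_sdiff.mpr ⟨h2, ?_⟩, h3⟩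
    · intro hmem
      rcases Finset.mem_insert.mp hmem with hh | hh
      · exact hne (pm_unique hM g1 he'M (Or.inl hh.symm) he (Or.inl rfl))
      · have hh : e'.1 = e.2 := Finset.mem_singleton.mp hh
        exact hne (pm_unique hM g2 he'M (Or.inl hh.symm) he (Or.inr rfl))
    · intro hmem
      rcases Finset.mem_insert.mp hmem with hh | hh
      · exact hne (pm_unique hM g1 he'M (Or.inr hh.symm) he (Or.inl rfl))
      · have hh : e'.2 = e.2 := Finset.mem_singleton.mp hh
        exact hne (pm_unique hM g2 he'M (Or.inr hh.symm) he (Or.inr rfl))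
  · intro x hx
    obtain ⟨hxX, hxne⟩ := Finset.mem_sdiff.mp hx
    obtain ⟨e'', ⟨he''M, hor⟩, huniq⟩ := hM.2 x hxX
    have hne : e'' ≠ e := by
      rintro rfl
      rcases hor with h | h <;> exact hxne (by simp [h])
    refine ⟨e'', ⟨Finset.mem_erase.mpr ⟨hne, he''M⟩, hor⟩, ?_⟩
    rintro e₃ ⟨he₃, hor₃⟩
    exact huniq e₃ ⟨Finset.mem_of_mem_erase he₃, hor₃⟩

lemma pm_union {X Y : Finset α} {M N : Finset (α × α)} (hXY : Disjoint X Y)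
    (hM : IsPerfectMatchingOn X M) (hN : IsPerfectMatchingOn Y N) :
    IsPerfectMatchingOn (X ∪ Y) (M ∪ N) ∧ Disjoint M N := by
  have hdisj : Disjoint M N := by
    rw [Finset.disjoint_left]
    intro e heM heN
    exact (Finset.disjoint_left.mp hXY) (hM.1 e heM).1 (hN.1 e heN).1
  refine ⟨⟨?_, ?_⟩, hdisj⟩
  · intro e he
    rcases Finset.mem_union.mp he with h | h
    · obtain ⟨h1, h2, h3⟩ := hM.1 e h
      exact ⟨Finset.mem_union_left _ h1, Finset.mem_union_left _ h2, h3⟩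
    · obtain ⟨h1, h2, h3⟩ := hN.1 e h
      exact ⟨Finset.mem_union_right _ h1, Finset.mem_union_right _ h2, h3⟩
  · intro x hx
    rcases Finset.mem_union.mp hx with hxX | hxY
    · obtain ⟨e, ⟨heM, hor⟩, huniq⟩ := hM.2 x hxX
      refine ⟨e, ⟨Finset.mem_union_left _ heM, hor⟩, ?_⟩
      rintro e' ⟨he', hor'⟩
      rcases Finset.mem_union.mp he' with h | h
      · exact huniq e' ⟨h, hor'⟩
      · obtain ⟨h1, h2, _⟩ := hN.1 e' h
        rcases hor' with hh | hh
        · exact absurd hxX (Finset.disjoint_right.mp hXY (by rw [hh]; exact h1))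
        · exact absurd hxX (Finset.disjoint_right.mp hXY (by rw [hh]; exact h2))
    · obtain ⟨e, ⟨heN, hor⟩, huniq⟩ := hN.2 x hxY
      refine ⟨e, ⟨Finset.mem_union_right _ heN, hor⟩, ?_⟩
      rintro e' ⟨he', hor'⟩
      rcases Finset.mem_union.mp he' with h | h
      · obtain ⟨h1, h2, _⟩ := hM.1 e' h
        rcases hor' with hh | hh
        · exact absurd hxY (Finset.disjoint_left.mp hXY (by rw [hh]; exact h1))
        · exact absurd hxY (Finset.disjoint_left.mp hXY (by rw [hh]; exact h2))
      · exact huniq e' ⟨h, hor'⟩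

lemma pm_walk (U : Finset α) : ∀ {S : Finset α} {MS MU : Finset (α × α)} {c : α},
    U ⊆ S → c ∈ S → c ∉ U → IsPerfectMatchingOn S MS → IsPerfectMatchingOn U MU →
    ∃ y W MS₂ MU₂, y ∈ S ∧ y ∉ U ∧ y ≠ c ∧ W ⊆ U ∧
      IsPerfectMatchingOn (S \ ({c, y} ∪ W)) MS₂ ∧ IsPerfectMatchingOn (U \ W) MU₂ ∧
      dist c y + (∑ e ∈ MS₂, dist e.1 e.2) + (∑ e ∈ MU₂, dist e.1 e.2) ≤
        (∑ e ∈ MS, dist e.1 e.2) + (∑ e ∈ MU, dist e.1 e.2) := by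
  induction U using Finset.strongInduction with
  | _ U ih =>
    intro S MS MU c hUS hcS hcU hMS hMU
    obtain ⟨e, heMS, z, hzc, hzS, hecase⟩ := pm_edge hMS hcS
    have hde : dist e.1 e.2 = dist c z := by
      rcases hecase with ⟨h1, h2⟩ | ⟨h1, h2⟩
      · rw [h1, h2]
      · rw [h1, h2, dist_comm]
    have hpair : ({e.1, e.2} : Finset α) = {c, z} := by
      rcases hecase with ⟨h1, h2⟩ | ⟨h1, h2⟩
      · rw [h1, h2]
      · rw [h1, h2, Finset.pair_comm]
    have hMS' : IsPerfectMatchingOn (S \ {c, z}) (MS.erase e) := by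
      have := pm_erase hMS heMS; rwa [hpair] at this
    have hsum_e : (∑ x ∈ MS.erase e, dist x.1 x.2) + dist c z = ∑ x ∈ MS, dist x.1 x.2 := by
      rw [← hde]; exact Finset.sum_erase_add MS _ heMS
    by_cases hzU : z ∈ U
    · -- continue the walk through z's MU-edge
      obtain ⟨f, hfMU, w, hwz, hwU, hfcase⟩ := pm_edge hMU hzU
      have hdf : dist f.1 f.2 = dist z w := by
        rcases hfcase with ⟨h1, h2⟩ | ⟨h1, h2⟩
        · rw [h1, h2]
        · rw [h1, h2, dist_comm]
      have hfpair : ({f.1, f.2} : Finset α) = {z, w} := by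
        rcases hfcase with ⟨h1, h2⟩ | ⟨h1, h2⟩
        · rw [h1, h2]
        · rw [h1, h2, Finset.pair_comm]
      have hMU' : IsPerfectMatchingOn (U \ {z, w}) (MU.erase f) := by
        have := pm_erase hMU hfMU; rwa [hfpair] at this
      have hsum_f : (∑ x ∈ MU.erase f, dist x.1 x.2) + dist z w = ∑ x ∈ MU, dist x.1 x.2 := by
        rw [← hdf]; exact Finset.sum_erase_add MU _ hfMU
      have hwc : w ≠ c := fun hh => hcU (hh ▸ hwU)
      have hss : U \ {z, w} ⊂ U := by
        refine Finset.sdiff_ssubset ?_ ?_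
        · intro t ht
          rcases Finset.mem_insert.mp ht with rfl | ht
          · exact hzU
          · rw [Finset.mem_singleton.mp ht]; exact hwU
        · exact ⟨z, Finset.mem_insert_self _ _⟩
      have hsub' : U \ {z, w} ⊆ S \ {c, z} := by
        intro u hu
        obtain ⟨huU, hunz⟩ := Finset.mem_sdiff.mp hu
        simp only [Finset.mem_insert, Finset.mem_singleton, not_or] at hunz
        refine Finset.mem_sdiff.mpr ⟨hUS huU, ?_⟩
        simp only [Finset.mem_insert, Finset.mem_singleton, not_or]
        exact ⟨fun hh => hcU (hh ▸ huU), hunz.1⟩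
      have hwS' : w ∈ S \ {c, z} := by
        refine Finset.mem_sdiff.mpr ⟨hUS hwU, ?_⟩
        simp only [Finset.mem_insert, Finset.mem_singleton, not_or]
        exact ⟨hwc, hwz⟩
      have hwU' : w ∉ U \ {z, w} := by simp
      obtain ⟨y, W', MS₂, MU₂, hyS', hyU', hyw, hW'sub, hpm1, hpm2, hbound⟩ :=
        ih _ hss hsub' hwS' hwU' hMS' hMU'
      obtain ⟨hyS, hync'⟩ := Finset.mem_sdiff.mp hyS'
      simp only [Finset.mem_insert, Finset.mem_singleton, not_or] at hync'
      obtain ⟨hyc, hyz⟩ := hync'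
      refine ⟨y, insert z (insert w W'), MS₂, MU₂, hyS, ?_, hyc, ?_, ?_, ?_, ?_⟩
      · intro hyU
        exact hyU' (Finset.mem_sdiff.mpr ⟨hyU, by
          simp only [Finset.mem_insert, Finset.mem_singleton, not_or]
          exact ⟨hyz, hyw⟩⟩)
      · intro t ht
        rcases Finset.mem_insert.mp ht with rfl | ht
        · exact hzU
        rcases Finset.mem_insert.mp ht with rfl | ht
        · exact hwU
        · exact (Finset.mem_sdiff.mp (hW'sub ht)).1
      · have hseteq : S \ ({c, y} ∪ insert z (insert w W')) = (S \ {c, z}) \ ({w, y} ∪ W') := by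
          ext a
          simp only [Finset.mem_sdiff, Finset.mem_union, Finset.mem_insert,
            Finset.mem_singleton, not_or]
          tauto
        rwa [hseteq]
      · have hseteq : U \ insert z (insert w W') = (U \ {z, w}) \ W' := by
          ext a
          simp only [Finset.mem_sdiff, Finset.mem_insert, Finset.mem_singleton, not_or]
          tauto
        rwa [hseteq]
      · have htri : dist c y ≤ dist c z + dist z w + dist w y :=
          (dist_triangle c z y).trans (by
            have := dist_triangle z w y; linarith)
        linarith
    · -- the walk ends at z
      refine ⟨z, ∅, MS.erase e, MU, hzS, hzU, hzc, Finset.empty_subset _, ?_, ?_, ?_⟩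
      · rwa [Finset.union_empty]
      · rwa [Finset.sdiff_empty]
      · linarith

lemma pm_core : ∀ (k : ℕ) (S U : Finset α) (MS MU : Finset (α × α)),
    (S \ U).card ≤ k → U ⊆ S → IsPerfectMatchingOn S MS → IsPerfectMatchingOn U MU →
    ∃ MT, IsPerfectMatchingOn (S \ U) MT ∧
      (∑ e ∈ MT, dist e.1 e.2) ≤ (∑ e ∈ MS, dist e.1 e.2) + (∑ e ∈ MU, dist e.1 e.2) := by
  intro k
  induction k with
  | zero =>
    intro S U MS MU hcard hUS hMS hMU
    have : S \ U = ∅ := Finset.card_eq_zero.mp (Nat.le_zero.mp hcard)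
    rw [this]
    exact ⟨∅, pm_empty, by positivity⟩
  | succ k ihk =>
    intro S U MS MU hcard hUS hMS hMU
    rcases Finset.eq_empty_or_nonempty (S \ U) with hemp | ⟨c, hc⟩
    · rw [hemp]
      exact ⟨∅, pm_empty, by positivity⟩
    · obtain ⟨hcS, hcU⟩ := Finset.mem_sdiff.mp hc
      obtain ⟨y, W, MS₂, MU₂, hyS, hyU, hyc, hWU, hpm1, hpm2, hbound⟩ :=
        pm_walk U hUS hcS hcU hMS hMU
      set S₂ := S \ ({c, y} ∪ W) with hS₂
      set U₂ := U \ W with hU₂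
      have hU₂S₂ : U₂ ⊆ S₂ := by
        intro u hu
        obtain ⟨huU, huW⟩ := Finset.mem_sdiff.mp hu
        refine Finset.mem_sdiff.mpr ⟨hUS huU, ?_⟩
        simp only [Finset.mem_union, Finset.mem_insert, Finset.mem_singleton, not_or]
        exact ⟨⟨fun hh => hcU (hh ▸ huU), fun hh => hyU (hh ▸ huU)⟩, huW⟩
      have hseteq : S₂ \ U₂ = (S \ U) \ {c, y} := by
        ext a
        simp only [hS₂, hU₂, Finset.mem_sdiff, Finset.mem_union, Finset.mem_insert,
          Finset.mem_singleton, not_or]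
        constructor
        · rintro ⟨⟨haS, ⟨hac, hay⟩, haW⟩, haU⟩
          exact ⟨⟨haS, fun haU' => haU ⟨haU', haW⟩⟩, hac, hay⟩
        · rintro ⟨⟨haS, haU⟩, hac, hay⟩
          exact ⟨⟨haS, ⟨hac, hay⟩, fun haW => haU (hWU haW)⟩, fun hh => haU hh.1⟩
      have hcard2 : (S₂ \ U₂).card ≤ k := by
        rw [hseteq]
        have h1 : (S \ U) \ {c, y} ⊆ (S \ U).erase c := by
          intro a ha
          obtain ⟨ha1, ha2⟩ := Finset.mem_sdiff.mp ha
          simp only [Finset.mem_insert, Finset.mem_singleton, not_or] at ha2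
          exact Finset.mem_erase.mpr ⟨ha2.1, ha1⟩
        have h2 := Finset.card_le_card h1
        rw [Finset.card_erase_of_mem hc] at h2
        omega
      obtain ⟨MT', hMT', hsum'⟩ := ihk S₂ U₂ MS₂ MU₂ hcard2 hU₂S₂ hpm1 hpm2
      rw [hseteq] at hMT'
      have hySU : y ∈ S \ U := Finset.mem_sdiff.mpr ⟨hyS, hyU⟩
      have hrw : S \ U = insert c (insert y ((S \ U) \ {c, y})) := by
        ext a
        simp only [Finset.mem_insert, Finset.mem_sdiff, Finset.mem_singleton, not_or]
        constructor
        · intro ⟨haS, haU⟩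
          by_cases hac : a = c
          · exact Or.inl hac
          by_cases hay : a = y
          · exact Or.inr (Or.inl hay)
          · exact Or.inr (Or.inr ⟨⟨haS, haU⟩, hac, hay⟩)
        · rintro (rfl | rfl | ⟨⟨haS, haU⟩, _⟩)
          · exact ⟨hcS, hcU⟩
          · exact ⟨hyS, hyU⟩
          · exact ⟨haS, haU⟩
      have hcy : (c, y) ∉ MT' := by
        intro hmem
        have := (hMT'.1 _ hmem).1
        simp at this
      refine ⟨insert (c, y) MT', ?_, ?_⟩
      · rw [hrw]
        refine pm_insert (fun hh => hyc hh.symm) ?_ ?_ hMT'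
        · simp
        · simp
      · rw [Finset.sum_insert hcy]
        simp only []
        have : dist c y + (∑ e ∈ MT', dist e.1 e.2) ≤
            dist c y + ((∑ e ∈ MS₂, dist e.1 e.2) + (∑ e ∈ MU₂, dist e.1 e.2)) := by
          linarith
        linarith

lemma costSet_finite (X : Finset α) :
    {c | ∃ M : Finset (α × α), IsPerfectMatchingOn X M ∧ c = ∑ e ∈ M, dist e.1 e.2}.Finite := by
  have h1 : {c | ∃ M : Finset (α × α), IsPerfectMatchingOn X M ∧ c = ∑ e ∈ M, dist e.1 e.2} =
      (fun M : Finset (α × α) => ∑ e ∈ M, dist e.1 e.2) '' {M | IsPerfectMatchingOn X M} := by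
    ext c
    simp only [Set.mem_setOf_eq, Set.mem_image]
    constructor
    · rintro ⟨M, hM, rfl⟩; exact ⟨M, hM, rfl⟩
    · rintro ⟨M, hM, rfl⟩; exact ⟨M, hM, rfl⟩
  rw [h1]
  refine Set.Finite.image _ (Set.Finite.subset (Finset.finite_toSet (X ×ˢ X).powerset) ?_)
  intro M hM
  simp only [Finset.coe_powerset, Set.mem_preimage, Set.mem_powerset_iff]
  intro e he
  obtain ⟨h1, h2, _⟩ := hM.1 e he
  exact Finset.mem_coe.mpr (Finset.mem_product.mpr ⟨h1, h2⟩)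

lemma matchCost_attained {X : Finset α} (h : ∃ M, IsPerfectMatchingOn X M) :
    ∃ M, IsPerfectMatchingOn X M ∧ matchCost X = ∑ e ∈ M, dist e.1 e.2 := by
  have hne : {c | ∃ M : Finset (α × α), IsPerfectMatchingOn X M ∧
      c = ∑ e ∈ M, dist e.1 e.2}.Nonempty := by
    obtain ⟨M, hM⟩ := h
    exact ⟨_, M, hM, rfl⟩
  exact hne.csInf_mem (costSet_finite X)

lemma matchCost_le {X : Finset α} {M : Finset (α × α)} (hM : IsPerfectMatchingOn X M) :
    matchCost X ≤ ∑ e ∈ M, dist e.1 e.2 :=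
  csInf_le (Set.Finite.bddBelow (costSet_finite X)) ⟨M, hM, rfl⟩

lemma matchCost_nonneg {X : Finset α} (h : ∃ M, IsPerfectMatchingOn X M) :
    0 ≤ matchCost X := by
  obtain ⟨M, _, hMc⟩ := matchCost_attained h
  rw [hMc]
  positivity

lemma matchCost_union {X Y : Finset α} (hXY : Disjoint X Y)
    (hx : ∃ M, IsPerfectMatchingOn X M) (hy : ∃ N, IsPerfectMatchingOn Y N) :
    matchCost (X ∪ Y) ≤ matchCost X + matchCost Y := by
  obtain ⟨M, hM, hMc⟩ := matchCost_attained hx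
  obtain ⟨N, hN, hNc⟩ := matchCost_attained hy
  obtain ⟨hpm, hdisj⟩ := pm_union hXY hM hN
  calc matchCost (X ∪ Y) ≤ ∑ e ∈ M ∪ N, dist e.1 e.2 := matchCost_le hpm
    _ = (∑ e ∈ M, dist e.1 e.2) + ∑ e ∈ N, dist e.1 e.2 := Finset.sum_union hdisj
    _ = matchCost X + matchCost Y := by rw [hMc, hNc]

lemma matchCost_sdiff {S U : Finset α} (hUS : U ⊆ S)
    (hs : ∃ M, IsPerfectMatchingOn S M) (hu : ∃ N, IsPerfectMatchingOn U N) :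
    matchCost (S \ U) ≤ matchCost S + matchCost U := by
  obtain ⟨MS, hMS, hMSc⟩ := matchCost_attained hs
  obtain ⟨MU, hMU, hMUc⟩ := matchCost_attained hu
  obtain ⟨MT, hMT, hsum⟩ := pm_core (S \ U).card S U MS MU le_rfl hUS hMS hMU
  calc matchCost (S \ U) ≤ ∑ e ∈ MT, dist e.1 e.2 := matchCost_le hMT
    _ ≤ (∑ e ∈ MS, dist e.1 e.2) + ∑ e ∈ MU, dist e.1 e.2 := hsum
    _ = matchCost S + matchCost U := by rw [hMSc, hMUc]

/-- `S` consists of `n` pairs `{pts (i, false), pts (i, true)}` with `n`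
even; feasible sets (containing exactly one point of each pair) are the sets
`{pts (i, σ i) : i}` for `σ : Fin n → Bool`. If `R̂` is a feasible set of minimum
`matchCost`, then
`max (matchCost R̂) (matchCost (S \ R̂)) ≤ 3 · min over feasible R of max (matchCost R) (matchCost (S \ R))`. -/
theorem min_max_two_matching_three_approx
    (n : ℕ) (hn : 1 ≤ n) (hneven : Even n)
    (pts : Fin n × Bool → α) (hinj : Function.Injective pts)
    (S : Finset α) (hS : S = Finset.image pts Finset.univ)
    (σhat : Fin n → Bool) (Rhat : Finset α)
    (hRhat : Rhat = Finset.image (fun i => pts (i, σhat i)) Finset.univ)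
    (hmin : ∀ σ : Fin n → Bool,
      matchCost Rhat ≤ matchCost (Finset.image (fun i => pts (i, σ i)) Finset.univ)) :
    max (matchCost Rhat) (matchCost (S \ Rhat)) ≤ 3 *
      ⨅ σ : Fin n → Bool,
        max (matchCost (Finset.image (fun i => pts (i, σ i)) Finset.univ))
            (matchCost (S \ Finset.image (fun i => pts (i, σ i)) Finset.univ)) := by
  set R : (Fin n → Bool) → Finset α :=
    fun σ => Finset.image (fun i => pts (i, σ i)) Finset.univ with hR
  have hRinj : ∀ σ : Fin n → Bool, Function.Injective (fun i => pts (i, σ i)) := by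
    intro σ i j hij
    have := hinj hij
    exact (Prod.mk.injEq _ _ _ _ ▸ this).1
  have hcardR : ∀ σ, (R σ).card = n := by
    intro σ
    rw [hR, Finset.card_image_of_injective _ (hRinj σ), Finset.card_univ, Fintype.card_fin]
  have hsub : ∀ σ, R σ ⊆ S := by
    intro σ x hx
    rw [hR] at hx
    obtain ⟨i, _, rfl⟩ := Finset.mem_image.mp hx
    rw [hS]
    exact Finset.mem_image.mpr ⟨(i, σ i), Finset.mem_univ _, rfl⟩
  have hcompl : ∀ σ, S \ R σ = R (fun i => !σ i) := by
    intro σ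
    ext x
    simp only [hR, hS, Finset.mem_sdiff, Finset.mem_image, Finset.mem_univ, true_and]
    constructor
    · rintro ⟨⟨p, rfl⟩, hnot⟩
      obtain ⟨i, b⟩ := p
      refine ⟨i, ?_⟩
      congr 1
      have hb : b ≠ σ i := by
        intro hb
        exact hnot ⟨i, by rw [hb]⟩
      ext : 2
      · rfl
      · cases b <;> cases hσ : σ i <;> simp_all
    · rintro ⟨i, rfl⟩
      refine ⟨⟨(i, !σ i), rfl⟩, ?_⟩
      rintro ⟨j, hj⟩
      have := hinj hj
      have h1 : j = i := ((Prod.mk.injEq _ _ _ _ ▸ this).1)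
      have h2 : σ j = !σ i := ((Prod.mk.injEq _ _ _ _ ▸ this).2)
      rw [h1] at h2
      cases σ i <;> simp at h2
  have hexR : ∀ σ, ∃ M, IsPerfectMatchingOn (R σ) M := by
    intro σ
    exact pm_exists (by rw [hcardR σ]; exact hneven)
  have hexC : ∀ σ, ∃ M, IsPerfectMatchingOn (S \ R σ) M := by
    intro σ
    rw [hcompl σ]
    exact hexR _
  have hexS : ∃ M, IsPerfectMatchingOn S M := by
    refine pm_exists ?_
    rw [hS, Finset.card_image_of_injective _ hinj, Finset.card_univ]
    simp only [Fintype.card_prod, Fintype.card_fin, Fintype.card_bool]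
    exact ⟨n, by ring⟩
  have hRhatR : Rhat = R σhat := hRhat
  have key : ∀ σ, max (matchCost Rhat) (matchCost (S \ Rhat)) ≤
      3 * max (matchCost (R σ)) (matchCost (S \ R σ)) := by
    intro σ
    have hc' : S \ Rhat = Finset.image (fun i => pts (i, !σhat i)) Finset.univ := by
      rw [hRhatR]
      simpa only [hR] using hcompl σhat
    have hHK : matchCost Rhat ≤ matchCost (S \ Rhat) := by
      rw [hc']
      exact hmin _
    have hHA : matchCost Rhat ≤ matchCost (R σ) := hmin σ
    have hK : matchCost (S \ Rhat) ≤ matchCost S + matchCost Rhat := by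
      refine matchCost_sdiff ?_ hexS ?_
      · rw [hRhatR]; exact hsub σhat
      · rw [hRhatR]; exact hexR σhat
    have hs : matchCost S ≤ matchCost (R σ) + matchCost (S \ R σ) := by
      have := matchCost_union (Finset.disjoint_sdiff) (hexR σ) (hexC σ)
      rwa [Finset.union_sdiff_of_subset (hsub σ)] at this
    have h1 : matchCost (R σ) ≤ max (matchCost (R σ)) (matchCost (S \ R σ)) :=
      le_max_left _ _
    have h2 : matchCost (S \ R σ) ≤ max (matchCost (R σ)) (matchCost (S \ R σ)) :=
      le_max_right _ _
    have hKfinal : matchCost (S \ Rhat) ≤ 3 * max (matchCost (R σ)) (matchCost (S \ R σ)) := by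
      linarith
    exact max_le (hHK.trans hKfinal) hKfinal
  have hlow : (max (matchCost Rhat) (matchCost (S \ Rhat))) / 3 ≤
      ⨅ σ : Fin n → Bool, max (matchCost (R σ)) (matchCost (S \ R σ)) := by
    refine le_ciInf fun σ => ?_
    have := key σ
    linarith
  have hfin := hlow
  rw [hR] at hfin
  linarith [hfin]
end

section
/- Let S consist of 2n points given as n pairs {p_i, q_i} in a metric space, with n ≥ 3, and let 0 < μ < 1/4. Suppose that every feasible coloring S = R ∪ B satisfies d(R, B) ≤ μ · (tspCost(R) + tspCost(B)), where d(R, B) = min{ d(x, y) : x ∈ R, y ∈ B }. Then tspCost(S) ≤ (1 / (1 − 4μ)) · min over all feasible colorings S = R ∪ B of (tspCost(R) + tspCost(B)). -/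
set_option linter.unusedSectionVars false


variable {α : Type*} [MetricSpace α] [DecidableEq α]

/-- The total length of the closed tour visiting the points of `l` in order
(each element of `l` is joined to its cyclic successor). -/
noncomputable def cycleWeight (l : List α) : ℝ :=
  ((l.zip (l.rotate 1)).map (fun e => dist e.1 e.2)).sum

/-- The minimum total length of a Hamiltonian cycle through the finite point set `X`. -/
noncomputable def tspCost (X : Finset α) : ℝ :=
  sInf {c | ∃ l : List α, l.Nodup ∧ l.toFinset = X ∧ c = cycleWeight l}

/-- The minimum point-wise distance between two finite sets. -/
noncomputable def setDist (X Y : Finset α) : ℝ :=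
  sInf {c | ∃ x ∈ X, ∃ y ∈ Y, c = dist x y}

noncomputable def pathWeight (l : List α) : ℝ :=
  ((l.zip l.tail).map (fun e => dist e.1 e.2)).sum

lemma pathWeight_single (a : α) : pathWeight [a] = 0 := by simp [pathWeight]

lemma pathWeight_cons_cons (a b : α) (l : List α) :
    pathWeight (a :: b :: l) = dist a b + pathWeight (b :: l) := by
  simp [pathWeight]

lemma pathWeight_nonneg (l : List α) : 0 ≤ pathWeight l := by
  apply List.sum_nonneg; intro x hx
  simp only [List.mem_map] at hx
  obtain ⟨e, _, rfl⟩ := hx; exact dist_nonneg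

lemma cycleWeight_nonneg (l : List α) : 0 ≤ cycleWeight l := by
  apply List.sum_nonneg; intro x hx
  simp only [List.mem_map] at hx
  obtain ⟨e, _, rfl⟩ := hx; exact dist_nonneg

lemma getLastD_append {β : Type*} (u : List β) (b d : β) (v : List β) :
    (u ++ b :: v).getLastD d = v.getLastD b := by
  induction u generalizing d with
  | nil => rw [List.nil_append, List.getLastD_cons]
  | cons a u ih => rw [List.cons_append, List.getLastD_cons, ih]

lemma zip_snoc {β : Type*} : ∀ (x : β) (u v : List β) (c : β),
    (x :: u).length = v.length + 1 →
    (x :: u).zip (v ++ [c]) = (x :: u).zip v ++ [(u.getLastD x, c)]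
  | x, [], [], c, h => by simp [List.getLastD_nil]
  | x, [], y :: v', c, h => by simp at h
  | x, x' :: u', [], c, h => by simp at h
  | x, x' :: u', y :: v', c, h => by
    have h' : (x' :: u').length = v'.length + 1 := by simpa using h
    have := zip_snoc x' u' v' c h'
    simp only [List.cons_append, List.zip_cons_cons, this, List.getLastD_cons]

lemma cycleWeight_cons (a : α) (t : List α) :
    cycleWeight (a :: t) = pathWeight (a :: t) + dist (t.getLastD a) a := by
  have hrot : (a :: t).rotate 1 = t ++ [a] := by
    rw [List.rotate_cons_succ, List.rotate_zero]
  have hz := zip_snoc a t t a (by simp)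
  rw [cycleWeight, hrot, hz]
  simp [pathWeight]

lemma pathWeight_append : ∀ (a : α) (s : List α) (c : α) (l₂ : List α),
    pathWeight ((a :: s) ++ c :: l₂) =
      pathWeight (a :: s) + dist (s.getLastD a) c + pathWeight (c :: l₂)
  | a, [], c, l₂ => by
    simp [pathWeight_cons_cons, pathWeight_single, List.getLastD_nil]
  | a, b :: s', c, l₂ => by
    have := pathWeight_append b s' c l₂
    simp only [List.cons_append] at this ⊢
    rw [pathWeight_cons_cons, pathWeight_cons_cons, this, List.getLastD_cons]
    ring

lemma cycleWeight_append_comm (u v : List α) :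
    cycleWeight (u ++ v) = cycleWeight (v ++ u) := by
  match u, v with
  | [], v => simp
  | u, [] => simp
  | a :: u', b :: v' =>
    rw [show (a :: u') ++ (b :: v') = a :: (u' ++ b :: v') by simp,
        show (b :: v') ++ (a :: u') = b :: (v' ++ a :: u') by simp,
        cycleWeight_cons, cycleWeight_cons,
        getLastD_append, getLastD_append,
        show a :: (u' ++ b :: v') = (a :: u') ++ b :: v' by simp,
        show b :: (v' ++ a :: u') = (b :: v') ++ a :: u' by simp,
        pathWeight_append, pathWeight_append]
    ring

lemma cycleWeight_merge (x y : α) (a b : List α) :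
    cycleWeight ((x :: a) ++ (y :: b)) ≤
      cycleWeight (x :: a) + cycleWeight (y :: b) + 2 * dist x y := by
  have hform : cycleWeight ((x :: a) ++ (y :: b)) =
      pathWeight (x :: a) + dist (a.getLastD x) y + pathWeight (y :: b)
        + dist (b.getLastD y) x := by
    rw [show (x :: a) ++ (y :: b) = x :: (a ++ y :: b) by simp, cycleWeight_cons,
      getLastD_append,
      show x :: (a ++ y :: b) = (x :: a) ++ y :: b by simp,
      pathWeight_append]
  rw [hform, cycleWeight_cons x a, cycleWeight_cons y b]
  have t1 : dist (a.getLastD x) y ≤ dist (a.getLastD x) x + dist x y :=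
    dist_triangle _ x y
  have t2 : dist (b.getLastD y) x ≤ dist (b.getLastD y) y + dist y x :=
    dist_triangle _ y x
  rw [dist_comm y x] at t2
  linarith

lemma tspCost_nonneg (X : Finset α) : 0 ≤ tspCost X := by
  apply Real.sInf_nonneg
  rintro c ⟨l, -, -, rfl⟩
  exact cycleWeight_nonneg l

lemma tspCost_bddBelow (X : Finset α) :
    BddBelow {c | ∃ l : List α, l.Nodup ∧ l.toFinset = X ∧ c = cycleWeight l} := by
  refine ⟨0, ?_⟩
  rintro c ⟨l, -, -, rfl⟩
  exact cycleWeight_nonneg l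

lemma tspCost_le (X : Finset α) (l : List α) (h1 : l.Nodup) (h2 : l.toFinset = X) :
    tspCost X ≤ cycleWeight l :=
  csInf_le (tspCost_bddBelow X) ⟨l, h1, h2, rfl⟩

lemma tspCost_exists (X : Finset α) {ε : ℝ} (hε : 0 < ε) :
    ∃ l : List α, l.Nodup ∧ l.toFinset = X ∧ cycleWeight l < tspCost X + ε := by
  obtain ⟨c, ⟨l, h1, h2, rfl⟩, hlt⟩ :=
    Real.lt_sInf_add_pos (s := {c | ∃ l : List α, l.Nodup ∧ l.toFinset = X ∧ c = cycleWeight l})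
      ⟨cycleWeight X.toList, X.toList, X.nodup_toList, X.toList_toFinset, rfl⟩ hε
  exact ⟨l, h1, h2, hlt⟩

lemma setDist_exists (X Y : Finset α) (hX : X.Nonempty) (hY : Y.Nonempty)
    {ε : ℝ} (hε : 0 < ε) :
    ∃ x ∈ X, ∃ y ∈ Y, dist x y < setDist X Y + ε := by
  obtain ⟨x0, hx0⟩ := hX
  obtain ⟨y0, hy0⟩ := hY
  obtain ⟨c, ⟨x, hx, y, hy, rfl⟩, hlt⟩ :=
    Real.lt_sInf_add_pos (s := {c | ∃ x ∈ X, ∃ y ∈ Y, c = dist x y})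
      ⟨dist x0 y0, x0, hx0, y0, hy0, rfl⟩ hε
  exact ⟨x, hx, y, hy, hlt⟩


/-- `S` consists of `n ≥ 3` pairs `{pts (i, false), pts (i, true)}` and
`0 < μ < 1/4`. If the instance is not `μ`-separable, i.e. every feasible coloring
`S = R ∪ B` satisfies `d(R, B) ≤ μ · (tspCost R + tspCost B)`, then
`tspCost S ≤ (1 / (1 - 4μ)) · min over feasible colorings of (tspCost R + tspCost B)`. -/
theorem not_separable_tsp_bound
    (n : ℕ) (hn : 3 ≤ n)
    (pts : Fin n × Bool → α) (hinj : Function.Injective pts)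
    (S : Finset α) (hS : S = Finset.image pts Finset.univ)
    (μ : ℝ) (hμ0 : 0 < μ) (hμ : μ < 1 / 4)
    (hnotsep : ∀ σ : Fin n → Bool,
      setDist (Finset.image (fun i => pts (i, σ i)) Finset.univ)
              (Finset.image (fun i => pts (i, !(σ i))) Finset.univ) ≤
        μ * (tspCost (Finset.image (fun i => pts (i, σ i)) Finset.univ) +
             tspCost (Finset.image (fun i => pts (i, !(σ i))) Finset.univ))) :
    tspCost S ≤ (1 / (1 - 4 * μ)) *
      ⨅ σ : Fin n → Bool,
        (tspCost (Finset.image (fun i => pts (i, σ i)) Finset.univ) +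
         tspCost (Finset.image (fun i => pts (i, !(σ i))) Finset.univ)) := by
  have h14 : (0:ℝ) < 1 - 4 * μ := by linarith
  have hcpos : (0:ℝ) < 1 / (1 - 4 * μ) := by positivity
  have hc1 : 1 + 2 * μ ≤ 1 / (1 - 4 * μ) := by
    rw [le_div_iff₀ h14]; nlinarith
  have key : ∀ σ : Fin n → Bool,
      tspCost S ≤ (1 / (1 - 4 * μ)) *
        (tspCost (Finset.image (fun i => pts (i, σ i)) Finset.univ) +
         tspCost (Finset.image (fun i => pts (i, !(σ i))) Finset.univ)) := by
    intro σ
    set R := Finset.image (fun i => pts (i, σ i)) Finset.univ with hR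
    set B := Finset.image (fun i => pts (i, !(σ i))) Finset.univ with hB
    have hsep : setDist R B ≤ μ * (tspCost R + tspCost B) := hnotsep σ
    have hRB : ∀ z, z ∈ R → z ∈ B → False := by
      intro z hz hzB
      rw [hR, Finset.mem_image] at hz
      rw [hB, Finset.mem_image] at hzB
      obtain ⟨i, -, rfl⟩ := hz
      obtain ⟨j, -, hj⟩ := hzB
      have := hinj hj
      rw [Prod.mk.injEq] at this
      obtain ⟨rfl, h2⟩ := this
      simp at h2
    have hunion : R ∪ B = S := by
      rw [hS]
      ext z
      simp only [Finset.mem_union, hR, hB, Finset.mem_image, Finset.mem_univ, true_and]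
      constructor
      · rintro (⟨i, rfl⟩ | ⟨i, rfl⟩)
        · exact ⟨(i, σ i), rfl⟩
        · exact ⟨(i, !(σ i)), rfl⟩
      · rintro ⟨⟨i, b⟩, rfl⟩
        by_cases hb : b = σ i
        · exact Or.inl ⟨i, by rw [hb]⟩
        · refine Or.inr ⟨i, ?_⟩
          have : b = !(σ i) := by
            cases b <;> cases h : σ i <;> simp_all
          rw [this]
    have i0 : Fin n := ⟨0, by omega⟩
    have hRne : R.Nonempty := ⟨pts (i0, σ i0), by
      rw [hR]; exact Finset.mem_image_of_mem _ (Finset.mem_univ i0)⟩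
    have hBne : B.Nonempty := ⟨pts (i0, !(σ i0)), by
      rw [hB]; exact Finset.mem_image_of_mem _ (Finset.mem_univ i0)⟩
    have hmain : ∀ ε : ℝ, 0 < ε →
        tspCost S ≤ (1 + 2 * μ) * (tspCost R + tspCost B) + 4 * ε := by
      intro ε hε
      obtain ⟨lR, hRnd, hRtf, hRw⟩ := tspCost_exists R hε
      obtain ⟨lB, hBnd, hBtf, hBw⟩ := tspCost_exists B hε
      obtain ⟨x, hxR, y, hyB, hxy⟩ := setDist_exists R B hRne hBne hε
      have hxl : x ∈ lR := by rw [← List.mem_toFinset, hRtf]; exact hxR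
      have hyl : y ∈ lB := by rw [← List.mem_toFinset, hBtf]; exact hyB
      obtain ⟨s, r, rfl⟩ := List.append_of_mem hxl
      obtain ⟨sb, rb, rfl⟩ := List.append_of_mem hyl
      have hpermR : List.Perm (x :: (r ++ s)) (s ++ x :: r) :=
        List.perm_append_comm (l₁ := x :: r) (l₂ := s)
      have hpermB : List.Perm (y :: (rb ++ sb)) (sb ++ y :: rb) :=
        List.perm_append_comm (l₁ := y :: rb) (l₂ := sb)
      have hndR' : (x :: (r ++ s)).Nodup := hpermR.nodup_iff.mpr hRnd
      have hndB' : (y :: (rb ++ sb)).Nodup := hpermB.nodup_iff.mpr hBnd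
      have htfR' : (x :: (r ++ s)).toFinset = R := by
        rw [← hRtf]; ext z; simp only [List.mem_toFinset]; rw [hpermR.mem_iff]
      have htfB' : (y :: (rb ++ sb)).toFinset = B := by
        rw [← hBtf]; ext z; simp only [List.mem_toFinset]; rw [hpermB.mem_iff]
      have hcwR : cycleWeight (x :: (r ++ s)) = cycleWeight (s ++ x :: r) :=
        cycleWeight_append_comm (x :: r) s
      have hcwB : cycleWeight (y :: (rb ++ sb)) = cycleWeight (sb ++ y :: rb) :=
        cycleWeight_append_comm (y :: rb) sb
      have hdisjL : (x :: (r ++ s)).Disjoint (y :: (rb ++ sb)) := by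
        intro z hz1 hz2
        exact hRB z (htfR' ▸ List.mem_toFinset.mpr hz1)
          (htfB' ▸ List.mem_toFinset.mpr hz2)
      have hmnd : ((x :: (r ++ s)) ++ (y :: (rb ++ sb))).Nodup :=
        List.Nodup.append hndR' hndB' hdisjL
      have hmtf : ((x :: (r ++ s)) ++ (y :: (rb ++ sb))).toFinset = S := by
        rw [List.toFinset_append, htfR', htfB', hunion]
      have h1 : tspCost S ≤ cycleWeight ((x :: (r ++ s)) ++ (y :: (rb ++ sb))) :=
        tspCost_le S _ hmnd hmtf
      have h2 := cycleWeight_merge x y (r ++ s) (rb ++ sb)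
      rw [hcwR, hcwB] at h2
      linarith [tspCost_nonneg R, tspCost_nonneg B]
    have h3 : tspCost S ≤ (1 + 2 * μ) * (tspCost R + tspCost B) := by
      apply le_of_forall_pos_le_add
      intro ε hε
      have := hmain (ε / 4) (by positivity)
      linarith
    calc tspCost S ≤ (1 + 2 * μ) * (tspCost R + tspCost B) := h3
      _ ≤ (1 / (1 - 4 * μ)) * (tspCost R + tspCost B) := by
          apply mul_le_mul_of_nonneg_right hc1
          have := tspCost_nonneg R
          have := tspCost_nonneg B
          linarith
  have hle : tspCost S / (1 / (1 - 4 * μ)) ≤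
      ⨅ σ : Fin n → Bool,
        (tspCost (Finset.image (fun i => pts (i, σ i)) Finset.univ) +
         tspCost (Finset.image (fun i => pts (i, !(σ i))) Finset.univ)) := by
    apply le_ciInf
    intro σ
    rw [div_le_iff₀ hcpos, mul_comm]
    exact key σ
  rw [div_le_iff₀ hcpos, mul_comm] at hle
  exact hle
end
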